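/- arXiv:1308.1470 — 3 statements merged into one kernel-verified Lean document; each statement's English description precedes it below -/
import Mathlib

section
/- Let α, β, γ, δ be nonzero complex numbers such that the multiset {α⁻¹, β⁻¹, γ⁻¹, δ⁻¹} equals the multiset of complex conjugates {conj α, conj β, conj γ, conj δ}. If |α| > 1, then either (a) there exist a unitary u (|u|=1), a real t > 0, and elements of the multiset equal to u·q^t and u·q^(-t) (for q = |α|^{1/t}, i.e., two of the four numbers are u·x and u·x⁻¹ with x = |α| > 1) while the remaining two have absolute value 1, or (b) the multiset can be written as {u·x, u·x⁻¹, v·y, v·y⁻¹} with |u| = |v| = 1 and x, y > 1. -/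
/-!
Write `σ z = (conj z)⁻¹` for the inversion in the unit circle. The hypothesis says that the
multiset `{α, β, γ, δ}` is stable under the involution `σ`, whose fixed points among nonzero
numbers are exactly those of absolute value one. Since `|α| > 1`, `α` is not fixed, so `σ α`
is another member of the multiset, and the remaining two members again form a `σ`-stable
multiset: either both are fixed, i.e. unitary, or they are a pair `{z, σ z}` with `|z| ≠ 1`.
A pair `{z, σ z}` with `|z| > 1` is `{u x, u x⁻¹}` for the polar decomposition `z = u x`.
-/

open Complex

noncomputable def unitCircleInversion (z : ℂ) : ℂ := (starRingEnd ℂ z)⁻¹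

local notation "σ" => unitCircleInversion

theorem Multiset.exists_eq_cons_cons_of_map_eq {α : Type*} {f : α → α}
    (hf : Function.Involutive f) {s : Multiset α} (hs : s.map f = s) {a : α} (ha : a ∈ s)
    (hfa : f a ≠ a) : ∃ t, s = a ::ₘ f a ::ₘ t ∧ t.map f = t := by
  classical
  have hfa_mem : f a ∈ s.erase a :=
    (Multiset.mem_erase_of_ne hfa).mpr (hs ▸ Multiset.mem_map_of_mem f ha)
  refine ⟨(s.erase a).erase (f a), ?_, ?_⟩
  · rw [Multiset.cons_erase hfa_mem, Multiset.cons_erase ha]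
  · rw [Multiset.map_erase _ hf.injective, Multiset.map_erase _ hf.injective, hs, hf a,
      Multiset.erase_comm]

theorem unitCircleInversion_involutive : Function.Involutive σ := fun z => by
  simp [unitCircleInversion]

theorem norm_unitCircleInversion (z : ℂ) : ‖σ z‖ = ‖z‖⁻¹ := by
  rw [unitCircleInversion, norm_inv, Complex.norm_conj]

theorem unitCircleInversion_eq_self_iff {z : ℂ} (hz : z ≠ 0) : σ z = z ↔ ‖z‖ = 1 := by
  rw [unitCircleInversion, ← mul_eq_one_iff_inv_eq₀ ((map_ne_zero _).mpr hz), mul_comm,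
    Complex.mul_conj', ← ofReal_pow, ofReal_eq_one,
    pow_eq_one_iff_of_nonneg (norm_nonneg z) two_ne_zero]

theorem unitCircleInversion_eq_polar (z : ℂ) : σ z = z / ‖z‖ * (‖z‖ : ℂ)⁻¹ := by
  rw [unitCircleInversion, Complex.inv_def, Complex.conj_conj, Complex.normSq_conj,
    Complex.normSq_eq_norm_sq]
  push_cast
  ring

theorem exists_pair_unitCircleInversion_eq {z : ℂ} (hz : 1 < ‖z‖) :
    ∃ u : ℂ, ‖u‖ = 1 ∧ ({z, σ z} : Multiset ℂ) = {u * ‖z‖, u * (‖z‖ : ℂ)⁻¹} := by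
  have hnorm : ‖z‖ ≠ 0 := (one_pos.trans hz).ne'
  refine ⟨z / ‖z‖, ?_, ?_⟩
  · rw [norm_div, norm_real, norm_norm, div_self hnorm]
  · rw [div_mul_cancel₀ z (ofReal_ne_zero.mpr hnorm), unitCircleInversion_eq_polar]

theorem exists_pair_unitCircleInversion_eq_of_norm_ne_one {z : ℂ} (hz : z ≠ 0)
    (h : ‖z‖ ≠ 1) : ∃ (v : ℂ) (y : ℝ), ‖v‖ = 1 ∧ 1 < y ∧
      ({z, σ z} : Multiset ℂ) = {v * y, v * (y : ℂ)⁻¹} := by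
  rcases h.lt_or_gt with hlt | hgt
  · have hσz : 1 < ‖σ z‖ := by
      rw [norm_unitCircleInversion]
      exact (one_lt_inv₀ (norm_pos_iff.mpr hz)).mpr hlt
    obtain ⟨v, hv, hpair⟩ := exists_pair_unitCircleInversion_eq hσz
    refine ⟨v, ‖σ z‖, hv, hσz, ?_⟩
    rwa [unitCircleInversion_involutive, Multiset.pair_comm] at hpair
  · obtain ⟨v, hv, hpair⟩ := exists_pair_unitCircleInversion_eq hgt
    exact ⟨v, ‖z‖, hv, hgt, hpair⟩

theorem map_unitCircleInversion_eq_of_inv_eq_conj {s : Multiset ℂ}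
    (h : s.map (·⁻¹) = s.map (starRingEnd ℂ)) : s.map σ = s := by
  have h' := congrArg (Multiset.map (·⁻¹)) h
  simp only [Multiset.map_map, Function.comp_def, inv_inv, Multiset.map_id'] at h'
  exact h'.symm

theorem eq_pair_of_map_unitCircleInversion_eq {t : Multiset ℂ} (hσt : t.map σ = t)
    (ht_card : Multiset.card t = 2) (ht_ne : ∀ z ∈ t, z ≠ 0) :
    (∃ c d : ℂ, ‖c‖ = 1 ∧ ‖d‖ = 1 ∧ t = {c, d}) ∨
      ∃ (v : ℂ) (y : ℝ), ‖v‖ = 1 ∧ 1 < y ∧ t = {v * y, v * (y : ℂ)⁻¹} := by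
  by_cases hfix : ∀ z ∈ t, σ z = z
  · obtain ⟨c, d, rfl⟩ := Multiset.card_eq_two.mp ht_card
    have hunit : ∀ z ∈ ({c, d} : Multiset ℂ), ‖z‖ = 1 := fun z hz =>
      (unitCircleInversion_eq_self_iff (ht_ne z hz)).mp (hfix z hz)
    exact Or.inl ⟨c, d, hunit c (by simp), hunit d (by simp), rfl⟩
  · obtain ⟨c, hc, hσc⟩ : ∃ z ∈ t, σ z ≠ z := by simpa using hfix
    obtain ⟨t', rfl, -⟩ :=
      Multiset.exists_eq_cons_cons_of_map_eq unitCircleInversion_involutive hσt hc hσc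
    obtain rfl : t' = 0 := by simpa using ht_card
    have hc_ne := ht_ne c hc
    obtain ⟨v, y, hv, hy, hcpair⟩ := exists_pair_unitCircleInversion_eq_of_norm_ne_one hc_ne
      fun h => hσc ((unitCircleInversion_eq_self_iff hc_ne).mpr h)
    exact Or.inr ⟨v, y, hv, hy, hcpair⟩

theorem satake_gl4_structure_general
    (α β γ δ : ℂ) (hβ : β ≠ 0) (hγ : γ ≠ 0) (hδ : δ ≠ 0)
    (hmult : ({α⁻¹, β⁻¹, γ⁻¹, δ⁻¹} : Multiset ℂ) =
      {(starRingEnd ℂ) α, (starRingEnd ℂ) β, (starRingEnd ℂ) γ, (starRingEnd ℂ) δ})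
    (habs : 1 < ‖α‖) :
    (∃ u c d : ℂ, ‖u‖ = 1 ∧ ‖c‖ = 1 ∧ ‖d‖ = 1 ∧
      ({α, β, γ, δ} : Multiset ℂ) =
        {u * (‖α‖ : ℂ), u * (‖α‖ : ℂ)⁻¹, c, d}) ∨
    (∃ (u v : ℂ) (x y : ℝ), ‖u‖ = 1 ∧ ‖v‖ = 1 ∧ 1 < x ∧ 1 < y ∧
      ({α, β, γ, δ} : Multiset ℂ) =
        {u * (x : ℂ), u * (x : ℂ)⁻¹, v * (y : ℂ), v * (y : ℂ)⁻¹}) := by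
  set s : Multiset ℂ := {α, β, γ, δ} with hs
  have hα : α ≠ 0 := norm_pos_iff.mp (one_pos.trans habs)
  have hσs : s.map σ = s := map_unitCircleInversion_eq_of_inv_eq_conj (by simpa [hs] using hmult)
  have hσα : σ α ≠ α := fun h => habs.ne' ((unitCircleInversion_eq_self_iff hα).mp h)
  obtain ⟨t, hst, hσt⟩ :=
    Multiset.exists_eq_cons_cons_of_map_eq unitCircleInversion_involutive hσs (by simp [hs]) hσα
  have ht_card : Multiset.card t = 2 := by simpa [hst] using congrArg Multiset.card hs
  have hs_ne : ∀ z ∈ s, z ≠ 0 := by simp [hs, hα, hβ, hγ, hδ]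
  have ht_ne : ∀ z ∈ t, z ≠ 0 := fun z hz => hs_ne z (by simp [hst, hz])
  obtain ⟨u, hu, hαpair⟩ := exists_pair_unitCircleInversion_eq habs
  have hs_eq : s = {u * ‖α‖, u * (‖α‖ : ℂ)⁻¹} + t := by rw [← hαpair, hst]; simp
  rcases eq_pair_of_map_unitCircleInversion_eq hσt ht_card ht_ne with
    ⟨c, d, hc, hd, rfl⟩ | ⟨v, y, hv, hy, rfl⟩
  · exact Or.inl ⟨u, c, d, hu, hc, hd, hs_eq⟩
  · exact Or.inr ⟨u, v, ‖α‖, y, hu, hv, habs, hy, hs_eq⟩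

theorem satake_gl4_structure
    (α β γ δ : ℂ) (hα : α ≠ 0) (hβ : β ≠ 0) (hγ : γ ≠ 0) (hδ : δ ≠ 0)
    (hmult : ({α⁻¹, β⁻¹, γ⁻¹, δ⁻¹} : Multiset ℂ) =
      {(starRingEnd ℂ) α, (starRingEnd ℂ) β, (starRingEnd ℂ) γ, (starRingEnd ℂ) δ})
    (habs : 1 < ‖α‖) :
    (∃ u c d : ℂ, ‖u‖ = 1 ∧ ‖c‖ = 1 ∧ ‖d‖ = 1 ∧
      ({α, β, γ, δ} : Multiset ℂ) =
        {u * (‖α‖ : ℂ), u * (‖α‖ : ℂ)⁻¹, c, d}) ∨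
    (∃ (u v : ℂ) (x y : ℝ), ‖u‖ = 1 ∧ ‖v‖ = 1 ∧ 1 < x ∧ 1 < y ∧
      ({α, β, γ, δ} : Multiset ℂ) =
        {u * (x : ℂ), u * (x : ℂ)⁻¹, v * (y : ℂ), v * (y : ℂ)⁻¹}) :=
  satake_gl4_structure_general α β γ δ hβ hγ hδ hmult habs
end

section
/- Let α, β, γ be nonzero complex numbers with {α⁻¹, β⁻¹, γ⁻¹} = {conj α, conj β, conj γ} as multisets. If not all of |α|, |β|, |γ| equal 1, then exactly one of them has absolute value 1 and the other two can be written as u·x and u·x⁻¹ where |u| = 1 and x > 1 is real. -/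
/-! The map `z ↦ (conj z)⁻¹` (inversion in the unit circle) is an involution whose nonzero fixed
points are exactly the unit circle, and the hypothesis says that it permutes the multiset
`{α, β, γ}`. A point `z` off the circle is therefore paired with its image, which in polar form
`z = u r` is `u r⁻¹`; what is left of the multiset is a single point invariant under the
involution, hence on the circle. -/

open Complex ComplexConjugate

theorem Multiset.exists_eq_cons_cons_of_map_eq_self {α : Type*} [DecidableEq α] {σ : α → α}
    (hσ : Function.Involutive σ) {s : Multiset α} (hs : s.map σ = s) {z : α} (hz : z ∈ s)
    (hne : σ z ≠ z) : ∃ t, s = z ::ₘ σ z ::ₘ t ∧ t.map σ = t := by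
  have hσz : σ z ∈ s.erase z := by
    refine (Multiset.mem_erase_of_ne hne).2 ?_
    rw [← hs]; exact Multiset.mem_map_of_mem σ hz
  set t := (s.erase z).erase (σ z)
  have hst : s = z ::ₘ σ z ::ₘ t := by
    rw [Multiset.cons_erase hσz, Multiset.cons_erase hz]
  refine ⟨t, hst, ?_⟩
  have := hs
  rw [hst, Multiset.map_cons, Multiset.map_cons, hσ z, Multiset.cons_swap] at this
  exact (Multiset.cons_inj_right _).1 ((Multiset.cons_inj_right _).1 this)

theorem Complex.inv_conj_eq_self_iff {z : ℂ} (hz : z ≠ 0) : (conj z)⁻¹ = z ↔ ‖z‖ = 1 := by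
  refine ⟨fun h => ?_, fun h => by rw [← inv_eq_conj h, inv_inv]⟩
  have hnorm : ‖z‖⁻¹ = ‖z‖ := by simpa using congrArg norm h
  have hsq : ‖z‖ ^ 2 = 1 := by
    rw [sq]; nth_rw 2 [← hnorm]; exact mul_inv_cancel₀ (norm_ne_zero_iff.2 hz)
  exact (pow_eq_one_iff_of_nonneg (norm_nonneg z) two_ne_zero).1 hsq

theorem Complex.inv_conj_mul_ofReal {u : ℂ} (hu : ‖u‖ = 1) (r : ℝ) :
    (conj (u * r))⁻¹ = u * (r : ℂ)⁻¹ := by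
  rw [map_mul, conj_ofReal, mul_inv, ← inv_eq_conj hu, inv_inv]

theorem Complex.exists_mul_ofReal_of_one_lt_norm {z : ℂ} (hz : 1 < ‖z‖) :
    ∃ (u : ℂ) (x : ℝ), ‖u‖ = 1 ∧ 1 < x ∧ z = u * x ∧ (conj z)⁻¹ = u * (x : ℂ)⁻¹ := by
  have hz0 : (‖z‖ : ℂ) ≠ 0 := by exact_mod_cast (one_pos.trans hz).ne'
  have hu : ‖z / ‖z‖‖ = 1 := by
    rw [norm_div, norm_real, norm_norm, div_self (one_pos.trans hz).ne']
  have hzu : z = z / ‖z‖ * ‖z‖ := (div_mul_cancel₀ z hz0).symm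
  refine ⟨z / ‖z‖, ‖z‖, hu, hz, hzu, ?_⟩
  conv_lhs => rw [hzu]
  exact inv_conj_mul_ofReal hu _

theorem Complex.pair_inv_conj_eq_of_norm_ne_one {z : ℂ} (hz : z ≠ 0) (hz1 : ‖z‖ ≠ 1) :
    ∃ (u : ℂ) (x : ℝ), ‖u‖ = 1 ∧ 1 < x ∧
      ({z, (conj z)⁻¹} : Multiset ℂ) = {u * x, u * (x : ℂ)⁻¹} := by
  rcases hz1.lt_or_gt with hlt | hgt
  · have : 1 < ‖(conj z)⁻¹‖ := by
      rw [norm_inv, RCLike.norm_conj]; exact one_lt_inv_iff₀.2 ⟨norm_pos_iff.2 hz, hlt⟩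
    obtain ⟨u, x, hu, hx, h1, h2⟩ := exists_mul_ofReal_of_one_lt_norm this
    refine ⟨u, x, hu, hx, ?_⟩
    rw [map_inv₀, conj_conj, inv_inv] at h2
    rw [h1, h2, Multiset.pair_comm]
  · obtain ⟨u, x, hu, hx, h1, h2⟩ := exists_mul_ofReal_of_one_lt_norm hgt
    exact ⟨u, x, hu, hx, by rw [h2, ← h1]⟩

theorem satake_gl3_structure
    (α β γ : ℂ) (hα : α ≠ 0) (hβ : β ≠ 0) (hγ : γ ≠ 0)
    (hmult : ({α⁻¹, β⁻¹, γ⁻¹} : Multiset ℂ) =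
      {(starRingEnd ℂ) α, (starRingEnd ℂ) β, (starRingEnd ℂ) γ})
    (hnotall : ¬ (‖α‖ = 1 ∧ ‖β‖ = 1 ∧ ‖γ‖ = 1)) :
    ∃ (u c : ℂ) (x : ℝ), ‖u‖ = 1 ∧ ‖c‖ = 1 ∧ 1 < x ∧
      ({α, β, γ} : Multiset ℂ) = {u * (x : ℂ), u * (x : ℂ)⁻¹, c} := by
  set s : Multiset ℂ := {α, β, γ} with hs_def
  have hs : s.map (fun z => (conj z)⁻¹) = s := by
    simpa [hs_def] using (congrArg (Multiset.map Inv.inv) hmult).symm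
  have hs0 : ∀ w ∈ s, w ≠ 0 := by simp [hs_def, hα, hβ, hγ]
  obtain ⟨z, hzs, hz1⟩ : ∃ z ∈ s, ‖z‖ ≠ 1 := by
    by_contra! h
    exact hnotall ⟨h α (by simp [hs_def]), h β (by simp [hs_def]), h γ (by simp [hs_def])⟩
  have hz0 := hs0 z hzs
  obtain ⟨t, hst, ht⟩ := Multiset.exists_eq_cons_cons_of_map_eq_self
    (fun w => by simp) hs hzs (mt (inv_conj_eq_self_iff hz0).1 hz1)
  obtain ⟨c, rfl⟩ : ∃ c, t = {c} :=
    Multiset.card_eq_one.1 (by simpa [hs_def, hst] using congrArg Multiset.card hst)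
  have hc0 : c ≠ 0 := hs0 c (by simp [hst])
  obtain ⟨u, x, hu, hx, hpair⟩ := pair_inv_conj_eq_of_norm_ne_one hz0 hz1
  refine ⟨u, c, x, hu, (inv_conj_eq_self_iff hc0).1 (by simpa using ht), hx, ?_⟩
  simpa only [Multiset.insert_eq_cons, Multiset.cons_add, Multiset.singleton_add, ← hst]
    using congrArg (· + ({c} : Multiset ℂ)) hpair
end

section
/- Let α, β, γ, δ be nonzero complex numbers with αβγδ = -1, with {α⁻¹, β⁻¹, γ⁻¹, δ⁻¹} = {α, β, γ, δ} = {conj α, conj β, conj γ, conj δ} as multisets. If some |α_i| > 1, then the multiset equals {u q^t, u q^(-t), 1, -1} for some u ∈ {1, -1}, q^t > 1. -/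
open Complex

/-! Pick `z` with `‖z‖ > 1`. As `z⁻¹ ≠ z`, stability under inversion splits `{z, z⁻¹}` off the
multiset; the remaining pair `{c, d}` is again stable under inversion with `c * d = -1`, and since
`c⁻¹ = d` would give `c * d = 1`, it must be `{1, -1}`. Finally `conj z` lies in
`{z, z⁻¹, 1, -1}` and has norm `‖z‖ > 1`, so `conj z = z` and `z` is real. -/

theorem Multiset.mem_of_map_eq_self {α : Type*} {f : α → α} {s : Multiset α}
    (hs : s.map f = s) {a : α} (ha : a ∈ s) : f a ∈ s :=
  hs ▸ Multiset.mem_map_of_mem f ha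

theorem Multiset.exists_eq_cons_cons_of_mem {α : Type*} [DecidableEq α] {s : Multiset α}
    {a b : α} (hab : a ≠ b) (ha : a ∈ s) (hb : b ∈ s) : ∃ t, s = a ::ₘ b ::ₘ t :=
  ⟨(s.erase a).erase b, by
    rw [Multiset.cons_erase ((Multiset.mem_erase_of_ne hab.symm).mpr hb), Multiset.cons_erase ha]⟩

section Field

variable {K : Type*} [Field K]

theorem Multiset.pair_eq_one_neg_one_of_map_inv_eq_self (hK : ringChar K ≠ 2) {c d : K}
    (hmul : c * d = -1) (hinv : ({c, d} : Multiset K).map (·⁻¹) = {c, d}) :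
    ({c, d} : Multiset K) = {1, -1} := by
  have hc : c ≠ 0 := left_ne_zero_of_mul (hmul ▸ neg_ne_zero.mpr one_ne_zero)
  have hcinv : c⁻¹ = c ∨ c⁻¹ = d := by
    simpa using Multiset.mem_of_map_eq_self hinv (a := c) (by simp)
  rcases hcinv with hcc | hcd
  · have hcc1 : c * c = 1 := by simpa [hcc] using mul_inv_cancel₀ hc
    have hd : d = -c := by linear_combination (-d) * hcc1 + c * hmul
    rcases mul_self_eq_one_iff.mp hcc1 with rfl | rfl
    · rw [hd]
    · rw [hd, neg_neg]
      exact Multiset.pair_comm _ _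
  · exfalso
    exact hK (neg_one_eq_one_iff.mp (hmul ▸ hcd ▸ mul_inv_cancel₀ hc))

theorem Multiset.eq_inv_pair_one_neg_one_of_map_inv_eq_self (hK : ringChar K ≠ 2)
    {s : Multiset K} (hinv : s.map (·⁻¹) = s) (hcard : Multiset.card s = 4) (hprod : s.prod = -1)
    {z : K} (hz : z ∈ s) (hzz : z⁻¹ ≠ z) : s = {z, z⁻¹, 1, -1} := by
  classical
  have hz0 : z ≠ 0 := by rintro rfl; simp at hzz
  obtain ⟨t, rfl⟩ :=
    Multiset.exists_eq_cons_cons_of_mem hzz.symm hz (Multiset.mem_of_map_eq_self hinv hz)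
  obtain ⟨c, d, rfl⟩ : ∃ c d, t = {c, d} := Multiset.card_eq_two.mp (by simpa using hcard)
  have htinv : ({c, d} : Multiset K).map (·⁻¹) = {c, d} := by
    simpa [Multiset.cons_swap z⁻¹ z] using hinv
  have hmul : c * d = -1 := by
    simpa [← mul_assoc, mul_inv_cancel₀ hz0] using hprod
  rw [Multiset.pair_eq_one_neg_one_of_map_inv_eq_self hK hmul htinv]
  rfl

end Field

theorem Complex.conj_eq_self_of_mem_of_one_lt_norm {z : ℂ} (hz : 1 < ‖z‖)
    (h : starRingEnd ℂ z ∈ ({z, z⁻¹, 1, -1} : Multiset ℂ)) : starRingEnd ℂ z = z := by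
  have hnorm : ‖starRingEnd ℂ z‖ = ‖z‖ := Complex.norm_conj z
  simp only [Multiset.insert_eq_cons, Multiset.mem_cons, Multiset.mem_singleton] at h
  rcases h with h | h | h | h
  · exact h
  all_goals
    rw [h] at hnorm
    simp only [norm_inv, norm_one, norm_neg] at hnorm
    linarith [inv_lt_one_of_one_lt₀ hz]

theorem Real.exists_sign_mul_of_one_lt_abs {r : ℝ} (hr : 1 < |r|) :
    ∃ u x : ℝ, (u = 1 ∨ u = -1) ∧ 1 < x ∧ r = u * x := by
  rcases le_total 0 r with h | h
  · exact ⟨1, r, Or.inl rfl, by rwa [abs_of_nonneg h] at hr, by ring⟩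
  · exact ⟨-1, -r, Or.inr rfl, by rwa [abs_of_nonpos h] at hr, by ring⟩

theorem self_dual_w_neg_one_structure_general
    (α β γ δ : ℂ)
    (hdet : α * β * γ * δ = -1)
    (hinv : ({α⁻¹, β⁻¹, γ⁻¹, δ⁻¹} : Multiset ℂ) = {α, β, γ, δ})
    (hconj : ({α, β, γ, δ} : Multiset ℂ) =
      {(starRingEnd ℂ) α, (starRingEnd ℂ) β, (starRingEnd ℂ) γ, (starRingEnd ℂ) δ})
    (hbig : 1 < ‖α‖ ∨ 1 < ‖β‖ ∨ 1 < ‖γ‖ ∨ 1 < ‖δ‖) :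
    ∃ (u x : ℝ), (u = 1 ∨ u = -1) ∧ 1 < x ∧
      ({α, β, γ, δ} : Multiset ℂ) = {(u : ℂ) * (x : ℂ), (u : ℂ) * (x : ℂ)⁻¹, 1, -1} := by
  set S : Multiset ℂ := {α, β, γ, δ}
  obtain ⟨z, hzS, hz⟩ : ∃ z ∈ S, 1 < ‖z‖ := by
    rcases hbig with h | h | h | h <;> exact ⟨_, by simp [S], h⟩
  have hzz : z⁻¹ ≠ z := fun h ↦ by
    have := inv_lt_one_of_one_lt₀ hz
    rw [← norm_inv, h] at this
    linarith
  have hS : S = {z, z⁻¹, 1, -1} :=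
    Multiset.eq_inv_pair_one_neg_one_of_map_inv_eq_self (by simp) (by simpa [S] using hinv)
      (by simp [S]) (by simpa [S, ← mul_assoc] using hdet) hzS hzz
  have hreal := Complex.conj_eq_self_of_mem_of_one_lt_norm hz
    (hS ▸ Multiset.mem_of_map_eq_self (f := starRingEnd ℂ) (by simpa [S] using hconj.symm) hzS)
  obtain ⟨r, rfl⟩ := Complex.conj_eq_iff_real.mp hreal
  obtain ⟨u, x, hu, hx, rfl⟩ :=
    Real.exists_sign_mul_of_one_lt_abs (by rwa [Complex.norm_real, Real.norm_eq_abs] at hz)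
  refine ⟨u, x, hu, hx, ?_⟩
  rcases hu with rfl | rfl <;> simp [hS]

theorem self_dual_w_neg_one_structure
    (α β γ δ : ℂ) (hα : α ≠ 0) (hβ : β ≠ 0) (hγ : γ ≠ 0) (hδ : δ ≠ 0)
    (hdet : α * β * γ * δ = -1)
    (hinv : ({α⁻¹, β⁻¹, γ⁻¹, δ⁻¹} : Multiset ℂ) = {α, β, γ, δ})
    (hconj : ({α, β, γ, δ} : Multiset ℂ) =
      {(starRingEnd ℂ) α, (starRingEnd ℂ) β, (starRingEnd ℂ) γ, (starRingEnd ℂ) δ})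
    (hbig : 1 < ‖α‖ ∨ 1 < ‖β‖ ∨ 1 < ‖γ‖ ∨ 1 < ‖δ‖) :
    ∃ (u x : ℝ), (u = 1 ∨ u = -1) ∧ 1 < x ∧
      ({α, β, γ, δ} : Multiset ℂ) = {(u : ℂ) * (x : ℂ), (u : ℂ) * (x : ℂ)⁻¹, 1, -1} :=
  self_dual_w_neg_one_structure_general α β γ δ hdet hinv hconj hbig
end
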